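/- For an immersion Φ of a surface into R³, the 1-form w = ∇H - 2(∇H)^⊤ - |H|²dΦ (equivalently w = ∇H + ⟨A°,H⟩^{♯g} + ⟨A,H⟩^{♯g}) satisfies ⟨w, dΦ⟩_g = 0. -/

import Mathlib

/-!
STATEMENT 2: For a conformal immersion Φ : Ω → ℝ³ (Ω ⊆ ℝ² open) with conformal factor e^λ
and mean curvature vector H (a normal field with ΔΦ = 2 e^{2λ} H), the vector-valued 1-form
w = ∇H - 2(∇H)^⊤ - |H|² dΦ satisfies ⟨w, dΦ⟩_g = 0, where (∇H)^⊤ is the tangential projection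
and ⟨·,·⟩_g is the g-pairing of vector-valued 1-forms (in conformal coordinates: e^{-2λ} times
the sum of the coordinate pairings).
-/

open scoped RealInnerProductSpace

noncomputable section

abbrev E3 := EuclideanSpace ℝ (Fin 3)

/-- partial derivative in direction `i` -/
noncomputable def pd {F : Type*} [NormedAddCommGroup F] [NormedSpace ℝ F]
    (i : Fin 2) (f : (Fin 2 → ℝ) → F) (x : Fin 2 → ℝ) : F :=
  fderiv ℝ f x (Pi.single i 1)

/-- tangential projection onto the immersed tangent plane of a conformal immersion -/
noncomputable def tangProj (Φ : (Fin 2 → ℝ) → E3) (lam : (Fin 2 → ℝ) → ℝ)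
    (x : Fin 2 → ℝ) (v : E3) : E3 :=
  Real.exp (-(2 * lam x)) • ∑ ν : Fin 2, ⟪v, pd ν Φ x⟫ • pd ν Φ x

theorem stmt2 (Ω : Set (Fin 2 → ℝ)) (hΩ : IsOpen Ω)
    (Φ H : (Fin 2 → ℝ) → E3) (lam : (Fin 2 → ℝ) → ℝ)
    (hΦ : ContDiffOn ℝ (⊤ : ℕ∞) Φ Ω) (hHsm : ContDiffOn ℝ (⊤ : ℕ∞) H Ω) (hlam : ContDiffOn ℝ (⊤ : ℕ∞) lam Ω)
    (hconf : ∀ x ∈ Ω, ∀ μ ν : Fin 2,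
      ⟪pd μ Φ x, pd ν Φ x⟫ = if μ = ν then Real.exp (2 * lam x) else 0)
    (hnormal : ∀ x ∈ Ω, ∀ μ : Fin 2, ⟪H x, pd μ Φ x⟫ = 0)
    (hmean : ∀ x ∈ Ω, (∑ μ : Fin 2, pd μ (pd μ Φ) x) = (2 * Real.exp (2 * lam x)) • H x) :
    ∀ x ∈ Ω,
      Real.exp (-(2 * lam x)) *
        ∑ μ : Fin 2,
          ⟪pd μ H x - (2:ℝ) • tangProj Φ lam x (pd μ H x) - (‖H x‖ ^ 2) • pd μ Φ x,
            pd μ Φ x⟫ = 0 := by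
  intro x hx
  have hxn : Ω ∈ nhds x := hΩ.mem_nhds hx
  have hΦat : ContDiffAt ℝ (⊤ : ℕ∞) Φ x := hΦ.contDiffAt hxn
  have hHat : ContDiffAt ℝ (⊤ : ℕ∞) H x := hHsm.contDiffAt hxn
  have hHd : DifferentiableAt ℝ H x := hHat.differentiableAt (by simp)
  have hpdΦ : ∀ μ : Fin 2, DifferentiableAt ℝ (pd μ Φ) x := by
    intro μ
    have h1 : ContDiffAt ℝ (⊤ : ℕ∞) (fun y => fderiv ℝ Φ y) x := hΦat.fderiv_right (by simp)
    exact ((h1.clm_apply contDiffAt_const).differentiableAt (by simp))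
  set c : ℝ := Real.exp (2 * lam x) with hc
  -- derivative of the normality relation
  have key : ∀ μ : Fin 2,
      ⟪H x, pd μ (pd μ Φ) x⟫ + ⟪pd μ H x, pd μ Φ x⟫ = 0 := by
    intro μ
    have hzero : (fun y => ⟪H y, pd μ Φ y⟫) =ᶠ[nhds x] (fun _ => (0:ℝ)) := by
      filter_upwards [hxn] with y hy using hnormal y hy μ
    have h1 : fderiv ℝ (fun y => ⟪H y, pd μ Φ y⟫) x = 0 := by
      rw [hzero.fderiv_eq]; exact fderiv_const_apply 0
    have h2 := fderiv_inner_apply (𝕜 := ℝ) hHd (hpdΦ μ) (Pi.single μ 1)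
    rw [h1] at h2
    simpa [pd] using h2.symm
  -- sum of the key relations
  have hsum : (∑ μ : Fin 2, ⟪pd μ H x, pd μ Φ x⟫) = -(2 * c * ‖H x‖ ^ 2) := by
    have h3 : ∑ μ : Fin 2, (⟪H x, pd μ (pd μ Φ) x⟫ + ⟪pd μ H x, pd μ Φ x⟫) = 0 :=
      Finset.sum_eq_zero fun μ _ => key μ
    rw [Finset.sum_add_distrib, ← inner_sum, hmean x hx] at h3
    have h4 : ⟪H x, (2 * c) • H x⟫ = 2 * c * ‖H x‖ ^ 2 := by
      rw [real_inner_smul_right, real_inner_self_eq_norm_sq]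
    linarith [h3, h4]
  -- tangential projection pairs like the identity against dΦ
  have hproj : ∀ (v : E3) (μ : Fin 2),
      ⟪tangProj Φ lam x v, pd μ Φ x⟫ = ⟪v, pd μ Φ x⟫ := by
    intro v μ
    have hexp : Real.exp (-(2 * lam x)) * c = 1 := by
      rw [hc, ← Real.exp_add]; simp
    rw [tangProj, real_inner_smul_left, sum_inner]
    have h5 : ∀ ν : Fin 2, ⟪(⟪v, pd ν Φ x⟫ : ℝ) • pd ν Φ x, pd μ Φ x⟫
        = ⟪v, pd ν Φ x⟫ * (if ν = μ then c else 0) := by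
      intro ν
      rw [real_inner_smul_left, hconf x hx ν μ]
    simp only [h5, mul_ite, mul_zero, Finset.sum_ite_eq', Finset.mem_univ, if_true]
    rw [mul_comm (⟪v, pd μ Φ x⟫ : ℝ) c, ← mul_assoc, hexp, one_mul]
  have hterm : ∀ μ : Fin 2,
      ⟪pd μ H x - (2:ℝ) • tangProj Φ lam x (pd μ H x) - (‖H x‖ ^ 2) • pd μ Φ x,
        pd μ Φ x⟫ = -⟪pd μ H x, pd μ Φ x⟫ - ‖H x‖ ^ 2 * c := by
    intro μ
    rw [inner_sub_left, inner_sub_left, real_inner_smul_left, real_inner_smul_left,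
      hproj, hconf x hx μ μ]
    simp; ring
  simp only [hterm]
  rw [Finset.sum_sub_distrib, Finset.sum_neg_distrib, hsum]
  simp [Fin.sum_univ_two]
  ring
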